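/- arXiv:2303.10615 — 2 statements merged into one kernel-verified Lean document; each statement's English description precedes it below -/
import Mathlib

section
/- Let G be a connected, cyclically 4-edge-connected cubic simple graph and let e and f be two distinct edges of G sharing no endpoint. Then the graph G − {e, f} obtained from G by deleting the edges e and f is 2-edge-connected. -/
namespace CiDC

open SimpleGraph

/-- A circuit in a graph: a connected 2-regular subgraph. -/
def IsCircuit {V : Type*} {G : SimpleGraph V} (H : G.Subgraph) : Prop :=
  H.Connected ∧ ∀ v ∈ H.verts, (H.neighborSet v).ncard = 2

open scoped Classical in
/-- A circuit double cover: a multiset of circuits covering every edge exactly twice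
(counted with multiplicity). -/
def IsCiDC {V : Type*} (G : SimpleGraph V) (C : Multiset G.Subgraph) : Prop :=
  (∀ H ∈ C, IsCircuit H) ∧ ∀ e ∈ G.edgeSet, C.countP (fun H => e ∈ H.edgeSet) = 2

/-- ν(G): the number of circuit double covers of `G`. -/
noncomputable def nu {V : Type*} (G : SimpleGraph V) : ℕ :=
  {C : Multiset G.Subgraph | IsCiDC G C}.ncard

/-- A cubic graph: every vertex has degree 3. -/
def IsCubic {V : Type*} (G : SimpleGraph V) : Prop :=
  ∀ v : V, (G.neighborSet v).ncard = 3



/-- The set of edges of `G` between `S` and its complement. -/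
def edgeCutOf {V : Type*} (G : SimpleGraph V) (S : Set V) : Set (Sym2 V) :=
  {e | ∃ u v : V, e = s(u, v) ∧ G.Adj u v ∧ u ∈ S ∧ v ∉ S}

/-- An edge cut: a nonempty set of edges of the form `E(S, V \ S)`. -/
def IsEdgeCut {V : Type*} (G : SimpleGraph V) (F : Set (Sym2 V)) : Prop :=
  F.Nonempty ∧ ∃ S : Set V, F = edgeCutOf G S

/-- A set of edges is circuit-separating if after its removal at least two of the
resulting components contain a circuit. -/
def CircuitSeparating {V : Type*} (G : SimpleGraph V) (F : Set (Sym2 V)) : Prop :=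
  ∃ H₁ H₂ : (G.deleteEdges F).Subgraph,
    IsCircuit H₁ ∧ IsCircuit H₂ ∧
      ∃ x ∈ H₁.verts, ∃ y ∈ H₂.verts, ¬ (G.deleteEdges F).Reachable x y

/-- Cyclically 4-edge-connected: every circuit-separating edge cut has size at least 4. -/
def CyclicallyFourEdgeConnected {V : Type*} (G : SimpleGraph V) : Prop :=
  ∀ F : Set (Sym2 V), IsEdgeCut G F → CircuitSeparating G F → 4 ≤ F.ncard

/-- 2-edge-connected: connected and bridgeless. -/
def TwoEdgeConnected {V : Type*} (G : SimpleGraph V) : Prop :=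
  G.Connected ∧ ∀ e : Sym2 V, ¬ G.IsBridge e

/-- 3-edge-connected: connected, and still connected after deleting any ≤ 2 edges. -/
def ThreeEdgeConnected {V : Type*} (G : SimpleGraph V) : Prop :=
  G.Connected ∧ ∀ F : Set (Sym2 V), F.ncard ≤ 2 → (G.deleteEdges F).Connected


section Helpers
variable {V : Type*}


/-- Membership propagates along walks in adjacency-closed sets. -/
lemma walk_mem_closed (G' : SimpleGraph V) (S : Set V)
    (hcl : ∀ u w, u ∈ S → G'.Adj u w → w ∈ S) :
    ∀ {x y : V}, x ∈ S → G'.Walk x y → y ∈ S := by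
  intro x y hx p
  revert hx
  induction p with
  | nil => exact id
  | cons h q ih => intro hx; exact ih (hcl _ _ hx h)

lemma exists_cycle_of_le_card {W : Type*} [Fintype W] (H : SimpleGraph W) [Fintype H.edgeSet]
    (hconn : H.Connected) (hcard : Fintype.card W ≤ H.edgeFinset.card) :
    ∃ (w : W) (c : H.Walk w w), c.IsCycle := by
  by_contra hno
  push_neg at hno
  have hac : H.IsAcyclic := fun v c hc => hno v c hc
  have ht : H.IsTree := ⟨hconn, hac⟩
  have := ht.card_edgeFinset
  omega

lemma path_endpoint_neighbor {G : SimpleGraph V} :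
    ∀ {u v : V} (p : G.Walk u v), p.IsPath → u ≠ v →
      ∃ x, s(x, v) ∈ p.edges ∧ p.toSubgraph.neighborSet v = {x} := by
  intro u v p
  induction p with
  | nil => intro _ h; exact absurd rfl h
  | @cons u b v h q ih =>
    intro hp hne
    by_cases hbv : b = v
    · subst hbv
      have hq : q = Walk.nil := Walk.isPath_iff_eq_nil.mp hp.of_cons
      subst hq
      refine ⟨u, by simp, ?_⟩
      simp only [Walk.toSubgraph, Subgraph.neighborSet_sup,
        neighborSet_snd_subgraphOfAdj, neighborSet_singletonSubgraph, Set.union_empty]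
    · have hvu : v ≠ u := by
        rintro rfl; exact hne rfl
      obtain ⟨x, hxe, hxn⟩ := ih hp.of_cons hbv
      refine ⟨x, by simp [hxe], ?_⟩
      simp only [Walk.toSubgraph, Subgraph.neighborSet_sup,
        neighborSet_subgraphOfAdj_of_ne_of_ne h hvu (Ne.symm hbv), hxn, Set.empty_union]

lemma cycle_start_neighbor {G : SimpleGraph V} {v : V} (c : G.Walk v v) (hc : c.IsCycle) :
    (c.toSubgraph.neighborSet v).ncard = 2 := by
  cases c with
  | nil => exact absurd hc Walk.IsCycle.not_of_nil
  | @cons _ b _ h p =>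
    rw [Walk.cons_isCycle_iff] at hc
    obtain ⟨hp, hne⟩ := hc
    obtain ⟨x, hxe, hxn⟩ := path_endpoint_neighbor p hp h.ne'
    have hbx : b ≠ x := by
      rintro rfl
      exact hne (by rwa [Sym2.eq_swap] at hxe)
    have : (Walk.cons h p).toSubgraph.neighborSet v = {b, x} := by
      simp only [Walk.toSubgraph, Subgraph.neighborSet_sup,
        neighborSet_fst_subgraphOfAdj, hxn]
      rw [Set.singleton_union]
    rw [this, Set.ncard_pair hbx]

lemma cycle_regular {G : SimpleGraph V} {v : V} (c : G.Walk v v) (hc : c.IsCycle) :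
    ∀ w ∈ c.toSubgraph.verts, (c.toSubgraph.neighborSet w).ncard = 2 := by
  classical
  intro w hw
  rw [Walk.mem_verts_toSubgraph] at hw
  rw [← Walk.toSubgraph_rotate c hw]
  exact cycle_start_neighbor (c.rotate _ hw) (hc.rotate hw)

/-- Connectivity of the induced graph on a reachability component. -/
lemma component_induce_connected (G' : SimpleGraph V) (v₀ : V) :
    (G'.induce {x | G'.Reachable v₀ x}).Connected := by
  classical
  apply induce_connected_of_patches v₀ (by exact Reachable.refl v₀)
  intro v hv
  obtain ⟨p⟩ := (hv : G'.Reachable v₀ v)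
  refine ⟨{x | x ∈ p.support}, ?_, p.start_mem_support, p.end_mem_support, ?_⟩
  · intro x hx
    exact ⟨p.takeUntil x hx⟩
  · exact (p.connected_induce_support).preconnected _ _



open scoped Classical in
lemma exists_cycle_in_induce [Fintype V] (G : SimpleGraph V) (hcubic : IsCubic G)
    (S : Set V) (hSconn : (G.induce S).Connected)
    (hcut : (edgeCutOf G S).ncard ≤ 3)
    (hint : ∀ v ∈ S, ∃ w ∈ S, G.Adj v w) :
    ∃ (w : ↥S) (c : (G.induce S).Walk w w), c.IsCycle := by
  have hdeg : ∀ v : V, (G.neighborFinset v).card = 3 := by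
    intro v
    rw [neighborFinset_def, ← Set.ncard_eq_toFinset_card']
    exact hcubic v
  set K := G.induce S with hK
  -- the induced degree counts neighbors inside S
  have hdegK : ∀ a : ↥S, K.degree a = ((G.neighborFinset ↑a).filter (· ∈ S)).card := by
    intro a
    rw [degree]
    refine Finset.card_bij (fun b _ => (b : V)) ?_ ?_ ?_
    · intro b hb
      rw [mem_neighborFinset] at hb
      simp only [Finset.mem_filter, mem_neighborFinset]
      exact ⟨hb, b.2⟩
    · intro b _ b' _ hbb
      exact Subtype.ext hbb
    · intro w hw
      simp only [Finset.mem_filter, mem_neighborFinset] at hw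
      exact ⟨⟨w, hw.2⟩, by rw [mem_neighborFinset]; exact hw.1, rfl⟩
  -- outward edges inject into the edge cut
  have hfin : (edgeCutOf G S).Finite := Set.toFinite _
  set eout : ↥S → Finset (Sym2 V) :=
    fun a => ((G.neighborFinset ↑a).filter (· ∉ S)).image (fun w => s((a : V), w)) with heout
  have heoutcard : ∀ a : ↥S, (eout a).card = ((G.neighborFinset ↑a).filter (· ∉ S)).card := by
    intro a
    apply Finset.card_image_of_injOn
    intro w hw w' hw' hww
    simp only [Finset.coe_filter, Set.mem_setOf_eq, mem_neighborFinset] at hw hw'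
    rcases Sym2.eq_iff.mp hww with ⟨_, h2⟩ | ⟨h1, h2⟩
    · exact h2
    · exact absurd h2.symm hw.1.ne
  have heoutsub : ∀ a : ↥S, eout a ⊆ hfin.toFinset := by
    intro a e' he'
    simp only [heout, Finset.mem_image, Finset.mem_filter, mem_neighborFinset] at he'
    obtain ⟨w, ⟨hadj, hw⟩, rfl⟩ := he'
    rw [Set.Finite.mem_toFinset]
    exact ⟨↑a, w, rfl, hadj, a.2, hw⟩
  have heoutdisj : ∀ a ∈ (Finset.univ : Finset ↥S), ∀ b ∈ Finset.univ, a ≠ b →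
      Disjoint (eout a) (eout b) := by
    intro a _ b _ hab
    rw [Finset.disjoint_left]
    intro e' hea heb
    simp only [heout, Finset.mem_image, Finset.mem_filter, mem_neighborFinset] at hea heb
    obtain ⟨w, ⟨hadj, hw⟩, rfl⟩ := hea
    obtain ⟨w', ⟨hadj', hw'⟩, he⟩ := heb
    rcases Sym2.eq_iff.mp he with ⟨h1, _⟩ | ⟨h1, h2⟩
    · exact hab (Subtype.ext h1.symm)
    · exact hw' (h2 ▸ a.2)
  have hsum_out : ∑ a : ↥S, ((G.neighborFinset ↑a).filter (· ∉ S)).card ≤ 3 := by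
    calc ∑ a : ↥S, ((G.neighborFinset ↑a).filter (· ∉ S)).card
        = ∑ a : ↥S, (eout a).card := by
          exact Finset.sum_congr rfl fun a _ => (heoutcard a).symm
      _ = (Finset.univ.biUnion eout).card := (Finset.card_biUnion heoutdisj).symm
      _ ≤ hfin.toFinset.card := Finset.card_le_card
          (Finset.biUnion_subset.mpr fun a _ => heoutsub a)
      _ = (edgeCutOf G S).ncard := (Set.ncard_eq_toFinset_card _ hfin).symm
      _ ≤ 3 := hcut
  have hsum : ∑ a : ↥S, K.degree a = 2 * K.edgeFinset.card :=
    K.sum_degrees_eq_twice_card_edges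
  have hsplit : ∀ a : ↥S, K.degree a + ((G.neighborFinset ↑a).filter (· ∉ S)).card = 3 := by
    intro a
    rw [hdegK a]
    rw [Finset.card_filter_add_card_filter_not]
    exact hdeg ↑a
  have htotal : 3 * Fintype.card ↥S ≤ 2 * K.edgeFinset.card + 3 := by
    have h1 : ∑ a : ↥S, (K.degree a + ((G.neighborFinset ↑a).filter (· ∉ S)).card)
        = 3 * Fintype.card ↥S := by
      rw [Finset.sum_congr rfl fun a _ => hsplit a]
      simp [Finset.sum_const, mul_comm]
    rw [Finset.sum_add_distrib, hsum] at h1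
    omega
  -- case analysis on the size of S
  have hne : Nonempty ↥S := hSconn.nonempty
  have hpos : 1 ≤ Fintype.card ↥S := Fintype.card_pos
  rcases Nat.lt_or_ge (Fintype.card ↥S) 3 with hlt | hge
  · interval_cases h : Fintype.card ↥S
    · -- card = 1
      obtain ⟨a, ha⟩ := Fintype.card_eq_one_iff.mp h
      obtain ⟨w, hwS, hadj⟩ := hint ↑a a.2
      have : (⟨w, hwS⟩ : ↥S) = a := ha _
      have hwa : w = ↑a := congrArg Subtype.val this
      rw [hwa] at hadj
      exact absurd hadj (G.loopless.irrefl ↑a)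
    · -- card = 2
      have hEle : K.edgeFinset.card ≤ 1 := by
        have := K.card_edgeFinset_le_card_choose_two
        rw [h] at this
        simpa using this
      omega
  · have hEge : Fintype.card ↥S ≤ K.edgeFinset.card := by omega
    exact exists_cycle_of_le_card K hSconn hEge







lemma exists_circuit [Fintype V] (G : SimpleGraph V) (hcubic : IsCubic G)
    (S : Set V) (F : Set (Sym2 V))
    (hSconn : (G.induce S).Connected)
    (hcut : (edgeCutOf G S).ncard ≤ 3)
    (hint : ∀ v ∈ S, ∃ w ∈ S, G.Adj v w)
    (hF : ∀ u w : V, u ∈ S → w ∈ S → s(u, w) ∉ F) :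
    ∃ H : (G.deleteEdges F).Subgraph, IsCircuit H ∧ H.verts.Nonempty ∧ H.verts ⊆ S := by
  obtain ⟨w, c, hc⟩ := exists_cycle_in_induce G hcubic S hSconn hcut hint
  have hφ : ∀ {a b : ↥S}, (G.induce S).Adj a b → (G.deleteEdges F).Adj ↑a ↑b := by
    intro a b hab
    rw [deleteEdges_adj]
    exact ⟨hab, hF _ _ a.2 b.2⟩
  let φ : G.induce S →g G.deleteEdges F := ⟨Subtype.val, hφ⟩
  have hinj : Function.Injective (φ : ↥S → V) := Subtype.val_injective
  have hc' : (c.map φ).IsCycle := hc.map hinj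
  refine ⟨(c.map φ).toSubgraph, ⟨(c.map φ).toSubgraph_connected, cycle_regular _ hc'⟩,
    ⟨↑w, ?_⟩, ?_⟩
  · rw [Walk.mem_verts_toSubgraph]
    exact (c.map φ).start_mem_support
  · intro x hx
    rw [Walk.mem_verts_toSubgraph, Walk.support_map] at hx
    obtain ⟨a, _, rfl⟩ := List.mem_map.mp hx
    exact a.2

lemma main_aux [Fintype V] (G : SimpleGraph V) (hconn : G.Connected)
    (hcyc : CyclicallyFourEdgeConnected G) (hcubic : IsCubic G)
    (F₀ : Set (Sym2 V)) (hF₀card : F₀.ncard ≤ 3)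
    (a b : V) (hnr : ¬ (G.deleteEdges F₀).Reachable a b)
    (hvert : ∀ v : V, ¬ (∀ w, G.Adj v w → s(v, w) ∈ F₀)) : False := by
  classical
  set G₀ := G.deleteEdges F₀ with hG₀
  set S := {x | G₀.Reachable a x} with hS
  set T := {x | G₀.Reachable b x} with hT
  have hclS : ∀ u w, u ∈ S → G₀.Adj u w → w ∈ S :=
    fun u w hu huw => hu.trans huw.reachable
  have hclT : ∀ u w, u ∈ T → G₀.Adj u w → w ∈ T :=
    fun u w hu huw => hu.trans huw.reachable
  have hdisjST : ∀ x, x ∈ S → x ∈ T → False := by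
    intro x hx hy
    exact hnr (hx.trans hy.symm)
  have hcrossS : edgeCutOf G S ⊆ F₀ := by
    rintro e' ⟨u, w, rfl, hadj, huS, hwS⟩
    by_contra hnotin
    exact hwS (hclS u w huS (by rw [hG₀, deleteEdges_adj]; exact ⟨hadj, hnotin⟩))
  have hcrossT : edgeCutOf G T ⊆ F₀ := by
    rintro e' ⟨u, w, rfl, hadj, huS, hwS⟩
    by_contra hnotin
    exact hwS (hclT u w huS (by rw [hG₀, deleteEdges_adj]; exact ⟨hadj, hnotin⟩))
  have hcutS : (edgeCutOf G S).ncard ≤ 3 :=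
    le_trans (Set.ncard_le_ncard hcrossS (Set.toFinite _)) hF₀card
  have hcutT : (edgeCutOf G T).ncard ≤ 3 :=
    le_trans (Set.ncard_le_ncard hcrossT (Set.toFinite _)) hF₀card
  have hintS : ∀ v ∈ S, ∃ w ∈ S, G.Adj v w := by
    intro v hv
    by_contra hno
    push_neg at hno
    apply hvert v
    intro w hadj
    exact hcrossS ⟨v, w, rfl, hadj, hv, fun hw => hno w hw hadj⟩
  have hintT : ∀ v ∈ T, ∃ w ∈ T, G.Adj v w := by
    intro v hv
    by_contra hno
    push_neg at hno
    apply hvert v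
    intro w hadj
    exact hcrossT ⟨v, w, rfl, hadj, hv, fun hw => hno w hw hadj⟩
  have hconnS : (G.induce S).Connected := by
    refine (component_induce_connected G₀ a).mono ?_
    intro x y hxy
    exact (G.deleteEdges_le F₀) hxy
  have hconnT : (G.induce T).Connected := by
    refine (component_induce_connected G₀ b).mono ?_
    intro x y hxy
    exact (G.deleteEdges_le F₀) hxy
  set F := edgeCutOf G S with hF
  have hFintS : ∀ u w : V, u ∈ S → w ∈ S → s(u, w) ∉ F := by
    rintro u w hu hw ⟨u', w', he, hadj, hu', hw'⟩
    rcases Sym2.eq_iff.mp he with ⟨h1, h2⟩ | ⟨h1, h2⟩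
    · exact hw' (h2 ▸ hw)
    · exact hw' (h1 ▸ hu)
  have hFintT : ∀ u w : V, u ∈ T → w ∈ T → s(u, w) ∉ F := by
    rintro u w hu hw ⟨u', w', he, hadj, hu', hw'⟩
    rcases Sym2.eq_iff.mp he with ⟨h1, h2⟩ | ⟨h1, h2⟩
    · exact hdisjST u (h1 ▸ hu') hu
    · exact hdisjST w (h2 ▸ hu') hw
  obtain ⟨H₁, hH₁, ⟨x, hx⟩, hH₁S⟩ := exists_circuit G hcubic S F hconnS hcutS hintS hFintS
  obtain ⟨H₂, hH₂, ⟨y, hy⟩, hH₂T⟩ := exists_circuit G hcubic T F hconnT hcutT hintT hFintT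
  have hclSF : ∀ u w, u ∈ S → (G.deleteEdges F).Adj u w → w ∈ S := by
    intro u w hu huw
    rw [deleteEdges_adj] at huw
    by_contra hw
    exact huw.2 ⟨u, w, rfl, huw.1, hu, hw⟩
  have hsep : ¬ (G.deleteEdges F).Reachable x y := by
    intro ⟨p⟩
    exact hdisjST y (walk_mem_closed _ S hclSF (hH₁S hx) p) (hH₂T hy)
  have hFne : F.Nonempty := by
    rw [Set.nonempty_iff_ne_empty]
    intro hFe
    have hclSG : ∀ u w, u ∈ S → G.Adj u w → w ∈ S := by
      intro u w hu huw
      by_contra hw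
      have : s(u, w) ∈ F := ⟨u, w, rfl, huw, hu, hw⟩
      rw [hFe] at this
      exact this
    obtain ⟨p⟩ := hconn.preconnected a b
    exact hdisjST b (walk_mem_closed G S hclSG (Reachable.refl a) p) (Reachable.refl b)
  have h4 := hcyc F ⟨hFne, S, rfl⟩ ⟨H₁, H₂, hH₁, hH₂, x, hx, y, hy, hsep⟩
  omega

lemma edge_ne_of_ne {G : SimpleGraph V} {v wi wj : V} (hadj : G.Adj v wi) (hne : wi ≠ wj) :
    s(v, wi) ≠ s(v, wj) := by
  intro heq
  rcases Sym2.eq_iff.mp heq with ⟨_, h2⟩ | ⟨_, h2⟩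
  · exact hne h2
  · exact hadj.ne h2.symm


end Helpers

/-- Removing two distinct non-adjacent edges from a connected, cyclically 4-edge-connected
cubic simple graph leaves a 2-edge-connected graph. -/
theorem stmt1 {V : Type*} [Fintype V] (G : SimpleGraph V)
    (hconn : G.Connected) (hcyc : CyclicallyFourEdgeConnected G) (hcubic : IsCubic G)
    (e f : Sym2 V) (he : e ∈ G.edgeSet) (hf : f ∈ G.edgeSet) (hef : e ≠ f)
    (hdisj : ∀ v : V, v ∈ e → v ∉ f) :
    TwoEdgeConnected (G.deleteEdges {e, f}) := by
  classical
  have hneighbors : ∀ v : V, ∃ w1 w2 w3 : V, w1 ≠ w2 ∧ w1 ≠ w3 ∧ w2 ≠ w3 ∧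
      G.Adj v w1 ∧ G.Adj v w2 ∧ G.Adj v w3 := by
    intro v
    obtain ⟨w1, w2, w3, h12, h13, h23, hset⟩ := Set.ncard_eq_three.mp (hcubic v)
    refine ⟨w1, w2, w3, h12, h13, h23, ?_, ?_, ?_⟩ <;>
      · rw [← mem_neighborSet, hset]; simp
  constructor
  · -- connectivity
    by_contra hnc
    have hnp : ¬ (G.deleteEdges {e, f}).Preconnected := by
      intro hp
      exact hnc ((connected_iff _).mpr ⟨hp, hconn.nonempty⟩)
    simp only [Preconnected] at hnp
    push_neg at hnp
    obtain ⟨a, b, hab⟩ := hnp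
    refine main_aux G hconn hcyc hcubic {e, f} ?_ a b hab ?_
    · calc ({e, f} : Set (Sym2 V)).ncard ≤ ({f} : Set (Sym2 V)).ncard + 1 :=
            Set.ncard_insert_le _ _
        _ ≤ 3 := by rw [Set.ncard_singleton]; omega
    · intro v hall
      obtain ⟨w1, w2, w3, h12, h13, h23, hadj1, hadj2, hadj3⟩ := hneighbors v
      have h1 := hall w1 hadj1
      have h2 := hall w2 hadj2
      have h3 := hall w3 hadj3
      simp only [Set.mem_insert_iff, Set.mem_singleton_iff] at h1 h2 h3
      rcases h1 with h1 | h1 <;> rcases h2 with h2 | h2 <;> rcases h3 with h3 | h3 <;>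
        first
          | exact edge_ne_of_ne hadj1 h12 (h1.trans h2.symm)
          | exact edge_ne_of_ne hadj1 h13 (h1.trans h3.symm)
          | exact edge_ne_of_ne hadj2 h23 (h2.trans h3.symm)
  · -- bridgeless
    intro g hg
    revert hg
    induction g using Sym2.ind with
    | _ x y =>
      intro hg
      rw [isBridge_iff] at hg
      have hnreach := hg
      have hrw : (G.deleteEdges {e, f}).deleteEdges {s(x, y)}
          = G.deleteEdges {e, f, s(x, y)} := by
        rw [deleteEdges_deleteEdges]
        congr 1
        ext z
        simp only [Set.union_singleton, Set.mem_insert_iff, Set.mem_singleton_iff]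
        tauto
      have hnr : ¬ (G.deleteEdges {e, f, s(x, y)}).Reachable x y := by
        rw [← hrw]
        exact hnreach
      refine main_aux G hconn hcyc hcubic {e, f, s(x, y)} ?_ x y hnr ?_
      · calc ({e, f, s(x, y)} : Set (Sym2 V)).ncard
            ≤ ({f, s(x, y)} : Set (Sym2 V)).ncard + 1 := Set.ncard_insert_le _ _
          _ ≤ (({s(x, y)} : Set (Sym2 V)).ncard + 1) + 1 := by
              exact Nat.add_le_add_right (Set.ncard_insert_le _ _) 1
          _ ≤ 3 := by rw [Set.ncard_singleton]
      · intro v hall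
        obtain ⟨w1, w2, w3, h12, h13, h23, hadj1, hadj2, hadj3⟩ := hneighbors v
        have h1 := hall w1 hadj1
        have h2 := hall w2 hadj2
        have h3 := hall w3 hadj3
        set A : Set (Sym2 V) := {s(v, w1), s(v, w2), s(v, w3)} with hA
        have hAcard : A.ncard = 3 :=
          Set.ncard_eq_three.mpr ⟨_, _, _, edge_ne_of_ne hadj1 h12,
            edge_ne_of_ne hadj1 h13, edge_ne_of_ne hadj2 h23, rfl⟩
        have hBcard : ({e, f, s(x, y)} : Set (Sym2 V)).ncard ≤ 3 := by
          calc ({e, f, s(x, y)} : Set (Sym2 V)).ncard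
              ≤ ({f, s(x, y)} : Set (Sym2 V)).ncard + 1 := Set.ncard_insert_le _ _
            _ ≤ (({s(x, y)} : Set (Sym2 V)).ncard + 1) + 1 :=
                Nat.add_le_add_right (Set.ncard_insert_le _ _) 1
            _ ≤ 3 := by rw [Set.ncard_singleton]
        have hAB : A ⊆ ({e, f, s(x, y)} : Set (Sym2 V)) := by
          intro s hs
          rcases hs with rfl | rfl | rfl
          · exact h1
          · exact h2
          · exact h3
        have hBA : A = ({e, f, s(x, y)} : Set (Sym2 V)) :=
          Set.eq_of_subset_of_ncard_le hAB (by omega) (Set.toFinite _)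
        have hveE : v ∈ e := by
          have : e ∈ A := by rw [hBA]; left; rfl
          rcases this with h | h | h <;> · rw [h]; exact Sym2.mem_mk_left _ _
        have hvfE : v ∈ f := by
          have : f ∈ A := by rw [hBA]; right; left; rfl
          rcases this with h | h | h <;> · rw [h]; exact Sym2.mem_mk_left _ _
        exact hdisj v hveE hvfE

end CiDC
end

section
/- Let G be a cubic simple graph, let C be a circuit double cover of G, and let {e, f, g} be an edge cut of G of size exactly 3. Then there are exactly three pairwise distinct circuits C1, C2, C3 in C containing an edge of the cut, and (up to relabeling) e belongs to C1 and C2, f belongs to C2 and C3, and g belongs to C1 and C3; every other circuit of C contains none of e, f, g. -/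
namespace CiDC

open SimpleGraph

open scoped Classical in
/-- Handshake-in-the-cut: for a subgraph all of whose vertices have even degree,
the number of ordered crossing pairs is even. -/
lemma even_cross {V : Type*} [Fintype V] {G : SimpleGraph V} (H : G.Subgraph)
    (hreg : ∀ v ∈ H.verts, (H.neighborSet v).ncard = 2) (S : Set V) :
    Even ((Finset.univ.filter
      (fun p : V × V => p.1 ∈ S ∧ p.2 ∉ S ∧ H.Adj p.1 p.2)).card) := by
  classical
  set D := Finset.univ.filter (fun p : V × V => p.1 ∈ S ∧ H.Adj p.1 p.2) with hD
  have hsplit : (D.filter (fun p => p.2 ∈ S)).card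
      + (D.filter (fun p => ¬ p.2 ∈ S)).card = D.card :=
    Finset.card_filter_add_card_filter_not _
  have hDeven : Even D.card := by
    rw [Finset.card_eq_sum_card_fiberwise
      (f := Prod.fst) (t := Finset.univ) (fun x _ => Finset.mem_univ _)]
    rw [even_iff_two_dvd]
    refine Finset.dvd_sum fun v _ => ?_
    by_cases hvS : v ∈ S
    · by_cases hv : v ∈ H.verts
      · have himg : (D.filter fun p => p.1 = v)
            = (Finset.univ.filter (fun w => H.Adj v w)).image (fun w => (v, w)) := by
          ext ⟨a, b⟩
          simp only [hD, Finset.mem_filter, Finset.mem_univ, true_and, Finset.mem_image]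
          constructor
          · rintro ⟨⟨_, hadj⟩, rfl⟩; exact ⟨b, hadj, rfl⟩
          · rintro ⟨w, hw, hwe⟩
            cases hwe
            exact ⟨⟨hvS, hw⟩, rfl⟩
        rw [himg, Finset.card_image_of_injective _ (fun a b hab => by
          simpa using hab)]
        have : (Finset.univ.filter (fun w => H.Adj v w)).card
            = (H.neighborSet v).ncard := by
          rw [Set.ncard_eq_toFinset_card']
          congr 1
          ext w
          simp [SimpleGraph.Subgraph.neighborSet]
          convert (Set.mem_toFinset (s := {w | H.Adj v w})).symm
          · exact Iff.rfl
          · exact congrArg (fun i => @Set.toFinset V {w | H.Adj v w} i) (Subsingleton.elim _ _)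
        rw [this, hreg v hv]
      · have : (D.filter fun p => p.1 = v) = ∅ := by
          ext ⟨a, b⟩
          simp only [hD, Finset.mem_filter, Finset.mem_univ, true_and,
            Finset.notMem_empty, iff_false, not_and]
          rintro ⟨_, hadj⟩ rfl
          exact hv hadj.fst_mem
        simp [this]
    · have : (D.filter fun p => p.1 = v) = ∅ := by
        ext ⟨a, b⟩
        simp only [hD, Finset.mem_filter, Finset.mem_univ, true_and,
          Finset.notMem_empty, iff_false, not_and]
        rintro ⟨hS, _⟩ rfl
        exact hvS hS
      simp [this]
  have hinEven : Even (D.filter (fun p => p.2 ∈ S)).card := by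
    set K : SimpleGraph V :=
      { Adj := fun v w => H.Adj v w ∧ v ∈ S ∧ w ∈ S
        symm := ⟨by rintro v w ⟨h1, h2, h3⟩; exact ⟨h1.symm, h3, h2⟩⟩
        loopless := ⟨by rintro v ⟨h1, -, -⟩; exact G.loopless.irrefl v (h1.adj_sub)⟩ } with hK
    have hcards : (D.filter (fun p => p.2 ∈ S)).card
        = (Finset.univ.filter fun (x, y) => K.Adj x y).card := by
      congr 1
      ext ⟨a, b⟩
      simp only [hD, Finset.mem_filter, Finset.mem_univ, true_and, hK]
      tauto
    rw [hcards, ← SimpleGraph.two_mul_card_edgeFinset (G := K)]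
    exact even_two_mul _
  have : (D.filter (fun p => ¬ p.2 ∈ S))
      = Finset.univ.filter (fun p : V × V => p.1 ∈ S ∧ p.2 ∉ S ∧ H.Adj p.1 p.2) := by
    ext ⟨a, b⟩
    simp only [hD, Finset.mem_filter, Finset.mem_univ, true_and]
    tauto
  rw [← this]
  have h1 : Even ((D.filter (fun p => p.2 ∈ S)).card
      + (D.filter (fun p => ¬ p.2 ∈ S)).card) := hsplit ▸ hDeven
  exact (Nat.even_add.mp h1).mp hinEven

open scoped Classical in
/-- A 2-regular subgraph meets any edge cut in an even number of edges. -/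
lemma even_card_cut_edges {V : Type*} [Fintype V] {G : SimpleGraph V} (H : G.Subgraph)
    (hreg : ∀ v ∈ H.verts, (H.neighborSet v).ncard = 2) {S : Set V} {F : Finset (Sym2 V)}
    (hF : (F : Set (Sym2 V)) = edgeCutOf G S) :
    Even ((F.filter (fun x => x ∈ H.edgeSet)).card) := by
  classical
  have hbij : (Finset.univ.filter
      (fun p : V × V => p.1 ∈ S ∧ p.2 ∉ S ∧ H.Adj p.1 p.2)).card
      = (F.filter (fun x => x ∈ H.edgeSet)).card := by
    apply Finset.card_bij (fun p _ => s(p.1, p.2))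
    · rintro ⟨a, b⟩ hp
      simp only [Finset.mem_filter, Finset.mem_univ, true_and] at hp ⊢
      obtain ⟨ha, hb, hadj⟩ := hp
      refine ⟨?_, hadj⟩
      have : s(a, b) ∈ (F : Set (Sym2 V)) := by
        rw [hF]; exact ⟨a, b, rfl, hadj.adj_sub, ha, hb⟩
      exact_mod_cast this
    · rintro ⟨a, b⟩ ha ⟨c, d⟩ hc hEq
      simp only [Finset.mem_filter, Finset.mem_univ, true_and] at ha hc
      rw [Sym2.eq_iff] at hEq
      rcases hEq with ⟨rfl, rfl⟩ | ⟨rfl, rfl⟩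
      · rfl
      · exact absurd ha.1 hc.2.1
    · intro x hx
      simp only [Finset.mem_filter] at hx
      obtain ⟨hxF, hxH⟩ := hx
      have : x ∈ edgeCutOf G S := by rw [← hF]; exact_mod_cast hxF
      obtain ⟨u, v, rfl, hadj, hu, hv⟩ := this
      rw [SimpleGraph.Subgraph.mem_edgeSet] at hxH
      exact ⟨(u, v), by simp [hu, hv, hxH], rfl⟩
  rw [← hbij]
  exact even_cross H hreg S

/-- Cardinality of a filter on a 3-element set. -/
lemma card_filter_triple {α : Type*} [DecidableEq α] (e f g : α)
    (hef : e ≠ f) (heg : e ≠ g) (hfg : f ≠ g) (p : α → Prop) [DecidablePred p] :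
    (({e, f, g} : Finset α).filter p).card
      = (if p e then 1 else 0) + (if p f then 1 else 0) + (if p g then 1 else 0) := by
  rw [show ({e, f, g} : Finset α) = insert e (insert f {g}) from rfl,
    Finset.filter_insert, Finset.filter_insert, Finset.filter_singleton]
  split_ifs <;>
    simp_all [Finset.card_insert_of_notMem, hef, heg, hfg]

open scoped Classical in
theorem stmt6_aux {V : Type*} [Fintype V] (G : SimpleGraph V) (hcubic : True)
    (C : Multiset G.Subgraph)
    (hcirc : ∀ H ∈ C, H.Connected ∧ ∀ v ∈ H.verts, (H.neighborSet v).ncard = 2)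
    (hcount : ∀ e ∈ G.edgeSet, C.countP (fun H => e ∈ H.edgeSet) = 2)
    (e f g : Sym2 V) (hef : e ≠ f) (heg : e ≠ g) (hfg : f ≠ g)
    (S : Set V) (hS : {e, f, g} = edgeCutOf G S) :
    ∃ C₁ C₂ C₃ : G.Subgraph, C₁ ∈ C ∧ C₂ ∈ C ∧ C₃ ∈ C ∧
      C₁ ≠ C₂ ∧ C₁ ≠ C₃ ∧ C₂ ≠ C₃ ∧
      e ∈ C₁.edgeSet ∧ e ∈ C₂.edgeSet ∧ e ∉ C₃.edgeSet ∧
      f ∈ C₂.edgeSet ∧ f ∈ C₃.edgeSet ∧ f ∉ C₁.edgeSet ∧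
      g ∈ C₁.edgeSet ∧ g ∈ C₃.edgeSet ∧ g ∉ C₂.edgeSet ∧
      ∀ H ∈ C, H ≠ C₁ → H ≠ C₂ → H ≠ C₃ →
        e ∉ H.edgeSet ∧ f ∉ H.edgeSet ∧ g ∉ H.edgeSet := by
  classical
  have hFcoe : ((({e, f, g} : Finset (Sym2 V)) : Set (Sym2 V))) = edgeCutOf G S := by
    rw [← hS]; simp
  have hmem : ∀ x ∈ ({e, f, g} : Set (Sym2 V)), x ∈ G.edgeSet := by
    rw [hS]; rintro x ⟨u, v, rfl, hadj, -, -⟩; exact hadj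
  have he : e ∈ G.edgeSet := hmem e (by simp)
  have hf : f ∈ G.edgeSet := hmem f (by simp)
  have hg : g ∈ G.edgeSet := hmem g (by simp)
  have hpar : ∀ H ∈ C, Even ((if e ∈ H.edgeSet then 1 else 0)
      + (if f ∈ H.edgeSet then 1 else 0) + (if g ∈ H.edgeSet then 1 else 0)) := by
    intro H hH
    have := even_card_cut_edges H (hcirc H hH).2 hFcoe
    rwa [card_filter_triple e f g hef heg hfg] at this
  have hx : ∀ H ∈ C, e ∈ H.edgeSet →
      ((f ∈ H.edgeSet ∧ g ∉ H.edgeSet) ∨ (g ∈ H.edgeSet ∧ f ∉ H.edgeSet)) := by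
    intro H hH hhe
    have hp := hpar H hH
    by_cases h1 : f ∈ H.edgeSet <;> by_cases h2 : g ∈ H.edgeSet <;>
      simp [hhe, h1, h2, Nat.even_iff] at hp ⊢
  have hy : ∀ H ∈ C, f ∈ H.edgeSet →
      ((e ∈ H.edgeSet ∧ g ∉ H.edgeSet) ∨ (g ∈ H.edgeSet ∧ e ∉ H.edgeSet)) := by
    intro H hH hhf
    have hp := hpar H hH
    by_cases h1 : e ∈ H.edgeSet <;> by_cases h2 : g ∈ H.edgeSet <;>
      simp [hhf, h1, h2, Nat.even_iff] at hp ⊢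
  have hz : ∀ H ∈ C, g ∈ H.edgeSet →
      ((e ∈ H.edgeSet ∧ f ∉ H.edgeSet) ∨ (f ∈ H.edgeSet ∧ e ∉ H.edgeSet)) := by
    intro H hH hhg
    have hp := hpar H hH
    by_cases h1 : e ∈ H.edgeSet <;> by_cases h2 : f ∈ H.edgeSet <;>
      simp [hhg, h1, h2, Nat.even_iff] at hp ⊢
  -- counting
  have hce : Multiset.card (C.filter (fun H => e ∈ H.edgeSet)) = 2 := by
    rw [← Multiset.countP_eq_card_filter]; exact hcount e he
  have hcf : Multiset.card (C.filter (fun H => f ∈ H.edgeSet)) = 2 := by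
    rw [← Multiset.countP_eq_card_filter]; exact hcount f hf
  have hcg : Multiset.card (C.filter (fun H => g ∈ H.edgeSet)) = 2 := by
    rw [← Multiset.countP_eq_card_filter]; exact hcount g hg
  set Aef := C.filter (fun H => e ∈ H.edgeSet ∧ f ∈ H.edgeSet) with hAef
  set Aeg := C.filter (fun H => e ∈ H.edgeSet ∧ g ∈ H.edgeSet) with hAeg
  set Afg := C.filter (fun H => f ∈ H.edgeSet ∧ g ∈ H.edgeSet) with hAfg
  have split1 : Multiset.card Aef + Multiset.card Aeg = 2 := by
    have h0 := Multiset.filter_add_not (fun H : G.Subgraph => f ∈ H.edgeSet)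
      (C.filter (fun H => e ∈ H.edgeSet))
    have h1 : (C.filter (fun H => e ∈ H.edgeSet)).filter
        (fun H => f ∈ H.edgeSet) = Aef := by
      rw [Multiset.filter_filter, hAef]
      all_goals exact Multiset.filter_congr (fun H _ => by tauto)
    have h2 : (C.filter (fun H => e ∈ H.edgeSet)).filter
        (fun H => ¬ f ∈ H.edgeSet) = Aeg := by
      rw [Multiset.filter_filter, hAeg]
      refine Multiset.filter_congr (fun H hH => ?_)
      have := hx H hH
      tauto
    rw [h1, h2] at h0
    rw [← hce, ← h0, Multiset.card_add]
  have split2 : Multiset.card Aef + Multiset.card Afg = 2 := by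
    have h0 := Multiset.filter_add_not (fun H : G.Subgraph => e ∈ H.edgeSet)
      (C.filter (fun H => f ∈ H.edgeSet))
    have h1 : (C.filter (fun H => f ∈ H.edgeSet)).filter
        (fun H => e ∈ H.edgeSet) = Aef := by
      rw [Multiset.filter_filter, hAef]
      all_goals exact Multiset.filter_congr (fun H _ => by tauto)
    have h2 : (C.filter (fun H => f ∈ H.edgeSet)).filter
        (fun H => ¬ e ∈ H.edgeSet) = Afg := by
      rw [Multiset.filter_filter, hAfg]
      refine Multiset.filter_congr (fun H hH => ?_)
      have := hy H hH
      tauto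
    rw [h1, h2] at h0
    rw [← hcf, ← h0, Multiset.card_add]
  have split3 : Multiset.card Aeg + Multiset.card Afg = 2 := by
    have h0 := Multiset.filter_add_not (fun H : G.Subgraph => e ∈ H.edgeSet)
      (C.filter (fun H => g ∈ H.edgeSet))
    have h1 : (C.filter (fun H => g ∈ H.edgeSet)).filter
        (fun H => e ∈ H.edgeSet) = Aeg := by
      rw [Multiset.filter_filter, hAeg]
      all_goals exact Multiset.filter_congr (fun H _ => by tauto)
    have h2 : (C.filter (fun H => g ∈ H.edgeSet)).filter
        (fun H => ¬ e ∈ H.edgeSet) = Afg := by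
      rw [Multiset.filter_filter, hAfg]
      refine Multiset.filter_congr (fun H hH => ?_)
      have := hz H hH
      tauto
    rw [h1, h2] at h0
    rw [← hcg, ← h0, Multiset.card_add]
  have hnef : Multiset.card Aef = 1 := by omega
  have hneg : Multiset.card Aeg = 1 := by omega
  have hnfg : Multiset.card Afg = 1 := by omega
  obtain ⟨C₂, hC2⟩ := Multiset.card_eq_one.mp hnef
  obtain ⟨C₁, hC1⟩ := Multiset.card_eq_one.mp hneg
  obtain ⟨C₃, hC3⟩ := Multiset.card_eq_one.mp hnfg
  have hC2mem : C₂ ∈ Aef := by rw [hC2]; exact Multiset.mem_singleton_self _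
  have hC1mem : C₁ ∈ Aeg := by rw [hC1]; exact Multiset.mem_singleton_self _
  have hC3mem : C₃ ∈ Afg := by rw [hC3]; exact Multiset.mem_singleton_self _
  rw [hAef, Multiset.mem_filter] at hC2mem
  rw [hAeg, Multiset.mem_filter] at hC1mem
  rw [hAfg, Multiset.mem_filter] at hC3mem
  obtain ⟨hC2C, he2, hf2⟩ := hC2mem
  obtain ⟨hC1C, he1, hg1⟩ := hC1mem
  obtain ⟨hC3C, hf3, hg3⟩ := hC3mem
  have hg2 : g ∉ C₂.edgeSet := by
    rcases hx C₂ hC2C he2 with ⟨-, h⟩ | ⟨-, h⟩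
    · exact h
    · exact absurd hf2 h
  have hf1 : f ∉ C₁.edgeSet := by
    rcases hx C₁ hC1C he1 with ⟨-, h⟩ | ⟨-, h⟩
    · exact absurd hg1 h
    · exact h
  have he3 : e ∉ C₃.edgeSet := by
    rcases hy C₃ hC3C hf3 with ⟨-, h⟩ | ⟨-, h⟩
    · exact absurd hg3 h
    · exact h
  refine ⟨C₁, C₂, C₃, hC1C, hC2C, hC3C, ?_, ?_, ?_, he1, he2, he3, hf2, hf3, hf1,
    hg1, hg3, hg2, ?_⟩
  · rintro rfl; exact hf1 hf2
  · rintro rfl; exact he3 he1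
  · rintro rfl; exact he3 he2
  · intro H hH h1 h2 h3
    have keyef : e ∈ H.edgeSet → f ∈ H.edgeSet → False := by
      intro hhe hhf
      have : H ∈ Aef := by rw [hAef, Multiset.mem_filter]; exact ⟨hH, hhe, hhf⟩
      rw [hC2, Multiset.mem_singleton] at this
      exact h2 this
    have keyeg : e ∈ H.edgeSet → g ∈ H.edgeSet → False := by
      intro hhe hhg
      have : H ∈ Aeg := by rw [hAeg, Multiset.mem_filter]; exact ⟨hH, hhe, hhg⟩
      rw [hC1, Multiset.mem_singleton] at this
      exact h1 this
    have keyfg : f ∈ H.edgeSet → g ∈ H.edgeSet → False := by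
      intro hhf hhg
      have : H ∈ Afg := by rw [hAfg, Multiset.mem_filter]; exact ⟨hH, hhf, hhg⟩
      rw [hC3, Multiset.mem_singleton] at this
      exact h3 this
    refine ⟨fun hhe => ?_, fun hhf => ?_, fun hhg => ?_⟩
    · rcases hx H hH hhe with ⟨h, -⟩ | ⟨h, -⟩
      · exact keyef hhe h
      · exact keyeg hhe h
    · rcases hy H hH hhf with ⟨h, -⟩ | ⟨h, -⟩
      · exact keyef h hhf
      · exact keyfg hhf h
    · rcases hz H hH hhg with ⟨h, -⟩ | ⟨h, -⟩
      · exact keyeg h hhg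
      · exact keyfg h hhg


/-- Structure of a circuit double cover of a cubic graph on a 3-edge cut `{e, f, g}`:
exactly three pairwise distinct circuits meet the cut, pairing up as
`e ∈ C₁,C₂`, `f ∈ C₂,C₃`, `g ∈ C₁,C₃` (up to relabeling), and no other circuit
contains any edge of the cut. -/
theorem stmt6 {V : Type*} [Fintype V] (G : SimpleGraph V) (hcubic : IsCubic G)
    (C : Multiset G.Subgraph) (hC : IsCiDC G C)
    (e f g : Sym2 V) (hef : e ≠ f) (heg : e ≠ g) (hfg : f ≠ g)
    (hcut : IsEdgeCut G {e, f, g}) :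
    ∃ C₁ C₂ C₃ : G.Subgraph, C₁ ∈ C ∧ C₂ ∈ C ∧ C₃ ∈ C ∧
      C₁ ≠ C₂ ∧ C₁ ≠ C₃ ∧ C₂ ≠ C₃ ∧
      e ∈ C₁.edgeSet ∧ e ∈ C₂.edgeSet ∧ e ∉ C₃.edgeSet ∧
      f ∈ C₂.edgeSet ∧ f ∈ C₃.edgeSet ∧ f ∉ C₁.edgeSet ∧
      g ∈ C₁.edgeSet ∧ g ∈ C₃.edgeSet ∧ g ∉ C₂.edgeSet ∧
      ∀ H ∈ C, H ≠ C₁ → H ≠ C₂ → H ≠ C₃ →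
        e ∉ H.edgeSet ∧ f ∉ H.edgeSet ∧ g ∉ H.edgeSet := by
  obtain ⟨hcirc, hcount⟩ := hC
  obtain ⟨-, S, hS⟩ := hcut
  exact stmt6_aux G trivial C (fun H hH => hcirc H hH) hcount e f g hef heg hfg S hS

end CiDC
end
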